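/- Let H be an infinite-dimensional separable Hilbert space and suppose Φ = {φ_n}_{n∈ℕ} is a frame for H that does phase retrieval. Then for every ε > 0 there exists a sequence Ψ = {ψ_n}_{n∈ℕ} in H which does not do phase retrieval (indeed fails the complement property) and satisfies Σ_{n∈ℕ} ‖φ_n − ψ_n‖² < ε. -/

import Mathlib

/-!
Fix a unit vector `e` and choose `N` so that `∑_{n ≥ N} |⟪e, φ n⟫|² < ε`. Keep `φ n` for
`n < N` and replace it for `n ≥ N` by its projection onto `eᗮ`; this moves the family by exactly
that tail in `ℓ²`. The tail now spans a subspace of `eᗮ` and the head a finite-dimensional one,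
so neither is dense in infinite dimension and the complement property fails. A family without
the complement property does not do phase retrieval: if `u ≠ 0` is orthogonal to the vectors
indexed by `S` and `w ≠ 0` to those indexed by `Sᶜ`, then `u + w` and `u - w` have the same
measurements.
-/

open scoped InnerProductSpace

section PhaseRetrieval

variable {𝕜 H ι : Type*} [RCLike 𝕜] [NormedAddCommGroup H] [InnerProductSpace 𝕜 H]

variable (𝕜) in
def DoesPhaseRetrieval (ψ : ι → H) : Prop :=
  ∀ f g : H, (∀ n, ‖⟪f, ψ n⟫_𝕜‖ = ‖⟪g, ψ n⟫_𝕜‖) → ∃ α : 𝕜, ‖α‖ = 1 ∧ f = α • g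

variable (𝕜) in
def HasComplementProperty (ψ : ι → H) : Prop :=
  ∀ S : Set ι, (Submodule.span 𝕜 (ψ '' S)).topologicalClosure = ⊤ ∨
    (Submodule.span 𝕜 (ψ '' Sᶜ)).topologicalClosure = ⊤

theorem DoesPhaseRetrieval.eq_zero_of_forall_inner_eq_zero {ψ : ι → H}
    (h : DoesPhaseRetrieval 𝕜 ψ) {x : H} (hx : ∀ n, ⟪x, ψ n⟫_𝕜 = 0) : x = 0 := by
  obtain ⟨α, -, rfl⟩ := h x 0 fun n => by simp [hx n]
  exact smul_zero α

theorem exists_ne_zero_forall_inner_eq_zero_of_topologicalClosure_span_ne_top [CompleteSpace H]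
    {ψ : ι → H} {S : Set ι} (hS : (Submodule.span 𝕜 (ψ '' S)).topologicalClosure ≠ ⊤) :
    ∃ u : H, u ≠ 0 ∧ ∀ n ∈ S, ⟪u, ψ n⟫_𝕜 = 0 := by
  have hbot : (Submodule.span 𝕜 (ψ '' S))ᗮ ≠ ⊥ := fun h => hS <| by
    rw [← Submodule.orthogonal_orthogonal_eq_closure, h, Submodule.bot_orthogonal_eq_top]
  obtain ⟨u, hu, hu0⟩ := Submodule.exists_mem_ne_zero_of_ne_bot hbot
  refine ⟨u, hu0, fun n hn => inner_eq_zero_symm.1 ?_⟩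
  exact (Submodule.mem_orthogonal _ u).1 hu (ψ n) (Submodule.subset_span ⟨n, hn, rfl⟩)

theorem DoesPhaseRetrieval.hasComplementProperty [CompleteSpace H] {ψ : ι → H}
    (h : DoesPhaseRetrieval 𝕜 ψ) : HasComplementProperty 𝕜 ψ := by
  intro S
  by_contra! hne
  obtain ⟨u, hu0, hu⟩ := exists_ne_zero_forall_inner_eq_zero_of_topologicalClosure_span_ne_top hne.1
  obtain ⟨w, hw0, hw⟩ := exists_ne_zero_forall_inner_eq_zero_of_topologicalClosure_span_ne_top hne.2
  have hmeas : ∀ n, ‖⟪u + w, ψ n⟫_𝕜‖ = ‖⟪u - w, ψ n⟫_𝕜‖ := by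
    intro n
    by_cases hn : n ∈ S
    · simp [inner_add_left, inner_sub_left, hu n hn]
    · simp [inner_add_left, inner_sub_left, hw n hn]
  obtain ⟨α, -, hα⟩ := h _ _ hmeas
  by_cases hα1 : α = 1
  · have := IsAddTorsionFree.of_isTorsionFree 𝕜 H
    rw [hα1, one_smul, sub_eq_add_neg, add_right_inj, self_eq_neg] at hα
    exact hw0 hα
  -- pairing `u + w = α • (u - w)` with `ψ n`, `n ∉ S`, gives `⟪u, ψ n⟫ = conj α * ⟪u, ψ n⟫`
  refine hu0 (h.eq_zero_of_forall_inner_eq_zero fun n => ?_)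
  by_cases hn : n ∈ S
  · exact hu n hn
  have hpair := congrArg (fun x => ⟪x, ψ n⟫_𝕜) hα
  simp only [inner_add_left, inner_sub_left, inner_smul_left, hw n hn, add_zero, sub_zero] at hpair
  have hconj : (starRingEnd 𝕜) α ≠ 1 := by
    rwa [Ne, ← map_one (starRingEnd 𝕜), (RingHom.injective _).eq_iff]
  have : (1 - (starRingEnd 𝕜) α) * ⟪u, ψ n⟫_𝕜 = 0 := by linear_combination hpair
  exact (mul_eq_zero.1 this).resolve_left (sub_ne_zero.2 hconj.symm)

theorem Submodule.topologicalClosure_span_ne_top_of_subset [TopologicalSpace H]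
    [IsTopologicalAddGroup H] [ContinuousConstSMul 𝕜 H] {s : Set H} {K : Submodule 𝕜 H}
    (hs : s ⊆ K) (hK : IsClosed (K : Set H)) (hK_top : K ≠ ⊤) :
    (span 𝕜 s).topologicalClosure ≠ ⊤ :=
  fun h => hK_top <| top_le_iff.1 <| h ▸ topologicalClosure_minimal _ (span_le.2 hs) hK

theorem exists_hasSum_indicator_Ici_lt {t : ℕ → ℝ} (ht : Summable t) {ε : ℝ} (hε : 0 < ε) :
    ∃ N s, HasSum ((Set.Ici N).indicator t) s ∧ s < ε := by
  obtain ⟨N, hN⟩ := ((tendsto_sum_nat_add t).eventually_lt_const hε).exists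
  refine ⟨N, _, ?_, hN⟩
  have htail : HasSum (fun n => (Set.Ici N).indicator t (n + N)) (∑' k, t (k + N)) := by
    simpa using ((summable_nat_add_iff N).2 ht).hasSum
  simpa [Finset.sum_eq_zero (fun i hi => Set.indicator_of_notMem
    (Set.notMem_Ici.2 (Finset.mem_range.1 hi)) t)] using (hasSum_nat_add_iff N).1 htail

variable (𝕜) in
def projectTail (e : H) (N : ℕ) (φ : ℕ → H) (n : ℕ) : H :=
  if n < N then φ n else φ n - ⟪e, φ n⟫_𝕜 • e

section projectTail

variable {e : H} {N : ℕ} {φ : ℕ → H}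

theorem projectTail_of_lt {n : ℕ} (hn : n < N) : projectTail 𝕜 e N φ n = φ n := if_pos hn

theorem inner_projectTail_of_le (he : ‖e‖ = 1) {n : ℕ} (hn : N ≤ n) :
    ⟪e, projectTail 𝕜 e N φ n⟫_𝕜 = 0 := by
  rw [projectTail, if_neg (not_lt.2 hn), inner_sub_right, inner_smul_right,
    inner_self_eq_norm_sq_to_K, he]
  simp

theorem norm_sub_projectTail_sq (he : ‖e‖ = 1) (n : ℕ) :
    ‖φ n - projectTail 𝕜 e N φ n‖ ^ 2 = (Set.Ici N).indicator (fun n => ‖⟪e, φ n⟫_𝕜‖ ^ 2) n := by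
  by_cases hn : n < N
  · simp [projectTail_of_lt hn, Set.indicator_of_notMem (Set.notMem_Ici.2 hn)]
  · simp [projectTail, hn, Set.indicator_of_mem (Set.mem_Ici.2 (not_lt.1 hn)), norm_smul, he]

theorem topologicalClosure_span_projectTail_Ici_ne_top (he : ‖e‖ = 1) :
    (Submodule.span 𝕜 (projectTail 𝕜 e N φ '' Set.Ici N)).topologicalClosure ≠ ⊤ := by
  refine Submodule.topologicalClosure_span_ne_top_of_subset (K := (𝕜 ∙ e)ᗮ) ?_
    (Submodule.isClosed_orthogonal _) fun h => ?_
  · rintro - ⟨n, hn, rfl⟩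
    exact Submodule.mem_orthogonal_singleton_iff_inner_right.2 (inner_projectTail_of_le he hn)
  · have he_mem : e ∈ (𝕜 ∙ e)ᗮ := h ▸ Submodule.mem_top
    rw [Submodule.mem_orthogonal_singleton_iff_inner_right, inner_self_eq_zero] at he_mem
    simp [he_mem] at he

theorem topologicalClosure_span_projectTail_Iio_ne_top (hinf : ¬ FiniteDimensional 𝕜 H) :
    (Submodule.span 𝕜 (projectTail 𝕜 e N φ '' Set.Iio N)).topologicalClosure ≠ ⊤ := by
  have hfin : (φ '' Set.Iio N).Finite := (Set.finite_Iio N).image φ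
  have := FiniteDimensional.span_of_finite 𝕜 hfin
  refine Submodule.topologicalClosure_span_ne_top_of_subset
    (K := Submodule.span 𝕜 (φ '' Set.Iio N)) ?_ (Submodule.closed_of_finiteDimensional _)
    fun h => hinf ?_
  · rintro - ⟨n, hn, rfl⟩
    rw [projectTail_of_lt hn]
    exact Submodule.subset_span ⟨n, hn, rfl⟩
  · exact Module.finite_def.2 (h ▸ Submodule.fg_span hfin)

end projectTail

end PhaseRetrieval

theorem phase_retrieval_frames_not_open_infinite_dim_general
    {𝕜 H : Type*} [RCLike 𝕜] [NormedAddCommGroup H] [InnerProductSpace 𝕜 H]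
    [CompleteSpace H]
    (hinf : ¬ FiniteDimensional 𝕜 H)
    (φ : ℕ → H) (A B : ℝ)
    (hframe : ∀ f : H, ∃ s : ℝ,
      HasSum (fun n => ‖(inner 𝕜 f (φ n) : 𝕜)‖ ^ 2) s ∧ A * ‖f‖ ^ 2 ≤ s ∧ s ≤ B * ‖f‖ ^ 2) :
    ∀ ε > (0 : ℝ), ∃ ψ : ℕ → H,
      (∃ S : Set ℕ,
        (Submodule.span 𝕜 (ψ '' S)).topologicalClosure ≠ ⊤ ∧
        (Submodule.span 𝕜 (ψ '' Sᶜ)).topologicalClosure ≠ ⊤) ∧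
      ¬ (∀ f g : H, (∀ n, ‖(inner 𝕜 f (ψ n) : 𝕜)‖ = ‖(inner 𝕜 g (ψ n) : 𝕜)‖) →
          ∃ α : 𝕜, ‖α‖ = 1 ∧ f = α • g) ∧
      ∃ s : ℝ, HasSum (fun n => ‖φ n - ψ n‖ ^ 2) s ∧ s < ε := by
  intro ε hε
  have : Nontrivial H := by
    contrapose! hinf
    infer_instance
  obtain ⟨x, hx⟩ := exists_ne (0 : H)
  obtain ⟨e, he⟩ : ∃ e : H, ‖e‖ = 1 := ⟨_, norm_smul_inv_norm (𝕜 := 𝕜) hx⟩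
  obtain ⟨_, hsum, -⟩ := hframe e
  obtain ⟨N, s, hs, hsε⟩ := exists_hasSum_indicator_Ici_lt hsum.summable hε
  have hIci := topologicalClosure_span_projectTail_Ici_ne_top (𝕜 := 𝕜) (φ := φ) (N := N) he
  have hIio := topologicalClosure_span_projectTail_Iio_ne_top (e := e) (φ := φ) (N := N) hinf
  rw [← Set.compl_Ici] at hIio
  refine ⟨projectTail 𝕜 e N φ, ⟨Set.Ici N, hIci, hIio⟩,
    fun hPR => (DoesPhaseRetrieval.hasComplementProperty hPR (Set.Ici N)).elim hIci hIio,
    s, ?_, hsε⟩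
  simpa only [norm_sub_projectTail_sq he] using hs

/-- In an infinite-dimensional separable Hilbert space, any frame doing
phase retrieval can be perturbed by an arbitrarily small amount (in the `ℓ²` sense) into a
family which fails the complement property, hence does not do phase retrieval. -/
theorem phase_retrieval_frames_not_open_infinite_dim
    {𝕜 H : Type*} [RCLike 𝕜] [NormedAddCommGroup H] [InnerProductSpace 𝕜 H]
    [CompleteSpace H] [TopologicalSpace.SeparableSpace H]
    (hinf : ¬ FiniteDimensional 𝕜 H)
    (φ : ℕ → H) (A B : ℝ) (hA : 0 < A) (hAB : A ≤ B)
    (hframe : ∀ f : H, ∃ s : ℝ,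
      HasSum (fun n => ‖(inner 𝕜 f (φ n) : 𝕜)‖ ^ 2) s ∧ A * ‖f‖ ^ 2 ≤ s ∧ s ≤ B * ‖f‖ ^ 2)
    (hPR : ∀ f g : H, (∀ n, ‖(inner 𝕜 f (φ n) : 𝕜)‖ = ‖(inner 𝕜 g (φ n) : 𝕜)‖) →
      ∃ α : 𝕜, ‖α‖ = 1 ∧ f = α • g) :
    ∀ ε > (0 : ℝ), ∃ ψ : ℕ → H,
      (∃ S : Set ℕ,
        (Submodule.span 𝕜 (ψ '' S)).topologicalClosure ≠ ⊤ ∧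
        (Submodule.span 𝕜 (ψ '' Sᶜ)).topologicalClosure ≠ ⊤) ∧
      ¬ (∀ f g : H, (∀ n, ‖(inner 𝕜 f (ψ n) : 𝕜)‖ = ‖(inner 𝕜 g (ψ n) : 𝕜)‖) →
          ∃ α : 𝕜, ‖α‖ = 1 ∧ f = α • g) ∧
      ∃ s : ℝ, HasSum (fun n => ‖φ n - ψ n‖ ^ 2) s ∧ s < ε :=
  phase_retrieval_frames_not_open_infinite_dim_general hinf φ A B hframe
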